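/- Fix an integer p ≥ 1. There exists a constant C = C(p) > 0 such that for every N ≥ 1, E[ sup_{x ∈ S^N} H(x) ] ≤ C · N. -/

import Mathlib

open MeasureTheory ProbabilityTheory

/-- The spherical `p`-spin Hamiltonian with coefficients `J`:
`H(x) = N^{-(p-1)/2} Σ_{i₁,…,i_p} J_{i₁,…,i_p} x_{i₁}⋯x_{i_p}`. -/
noncomputable def pspin (p N : ℕ) (J : (Fin p → Fin N) → ℝ)
    (x : EuclideanSpace ℝ (Fin N)) : ℝ :=
  (N : ℝ) ^ (-(((p : ℝ) - 1) / 2)) * ∑ i : Fin p → Fin N, J i * ∏ j, x (i j)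

/-- The sphere `S^N` of radius `√N` in `ℝ^N`. -/
noncomputable def sphereN (N : ℕ) : Set (EuclideanSpace ℝ (Fin N)) :=
  Metric.sphere (0 : EuclideanSpace ℝ (Fin N)) (Real.sqrt N)

/-
On the sphere `‖x‖ = √N`, `H(x) = N^{-(p-1)/2} A(x, …, x)` for the random `p`-linear form
`A(y₁, …, y_p) = ∑ J_i ∏ y_j(i_j)`, so `sup H ≤ √N ‖A‖`. Peeling off one argument at a time
against a `1/2`-net `T` of the unit ball gives `‖A‖ ≤ 2^p max_{t ∈ T^p} |A t|`, and a volume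
comparison gives `#T ≤ 5^N`. Each `A t` is a Gaussian combination of the `J_i` with variance
`∏ ‖t_j‖² ≤ 1`, so the maximal inequality for `2 · 5^{Np}` sub-Gaussian variables, taken at
`λ = √N`, bounds `E max |A t|` by `log (2 · 5^{Np}) / √N + √N / 2 = O(p √N)`.
-/

open Metric Module Real Finset
open scoped NNReal ENNReal

lemma Metric.IsCover.exists_norm_sub_le {E : Type*} [SeminormedAddCommGroup E] {ε : ℝ≥0}
    {s T : Set E} (hT : IsCover ε s T) {y : E} (hy : y ∈ s) : ∃ t ∈ T, ‖y - t‖ ≤ ε := by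
  simpa [mem_closedBall, dist_eq_norm] using (isCover_iff_subset_iUnion_closedBall.1 hT) hy

section Nets

variable {E : Type*} [NormedAddCommGroup E] [NormedSpace ℝ E]

theorem ContinuousLinearMap.opNorm_le_two_mul_of_isCover {F : Type*}
    [SeminormedAddCommGroup F] [NormedSpace ℝ F] (L : E →L[ℝ] F) {T : Set E}
    (hT : IsCover (1 / 2) (closedBall 0 1) T) {B : ℝ} (hB : ∀ t ∈ T, ‖L t‖ ≤ B) :
    ‖L‖ ≤ 2 * B := by
  obtain ⟨t₀, ht₀, -⟩ := hT.exists_norm_sub_le (mem_closedBall_self zero_le_one)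
  have hB0 : 0 ≤ B := (norm_nonneg _).trans (hB t₀ ht₀)
  suffices ‖L‖ ≤ B + ‖L‖ / 2 by linarith
  refine L.opNorm_le_of_unit_norm (by positivity) fun y hy => ?_
  obtain ⟨t, ht, hyt⟩ := hT.exists_norm_sub_le (mem_closedBall_zero_iff.2 hy.le)
  calc ‖L y‖ = ‖L t + L (y - t)‖ := by rw [map_sub, add_sub_cancel]
    _ ≤ B + ‖L‖ * (1 / 2) := norm_add_le_of_le (hB t ht)
        (L.le_opNorm_of_le (by exact_mod_cast hyt))
    _ = B + ‖L‖ / 2 := by ring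

theorem ContinuousMultilinearMap.opNorm_le_two_pow_mul_of_isCover {G : Type*}
    [NormedAddCommGroup G] [NormedSpace ℝ G] {T : Set E}
    (hT : IsCover (1 / 2) (closedBall 0 1) T) {B : ℝ} :
    ∀ {p : ℕ} (f : ContinuousMultilinearMap ℝ (fun _ : Fin p => E) G),
      (∀ t : Fin p → E, (∀ j, t j ∈ T) → ‖f t‖ ≤ B) → ‖f‖ ≤ 2 ^ p * B
  | 0, f, hf => by
    have hB : 0 ≤ B := (norm_nonneg _).trans (hf 0 finZeroElim)
    refine f.opNorm_le_bound (by positivity) fun m => ?_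
    simpa using hf m finZeroElim
  | p + 1, f, hf => by
    rw [← f.curryLeft_norm, pow_succ, mul_comm _ 2, mul_assoc]
    refine f.curryLeft.opNorm_le_two_mul_of_isCover hT fun t₀ ht₀ =>
      opNorm_le_two_pow_mul_of_isCover hT _ fun t ht => ?_
    rw [curryLeft_apply]
    exact hf _ (Fin.cases ht₀ ht)

end Nets

section Packing

variable {E : Type*} [NormedAddCommGroup E] [NormedSpace ℝ E] [FiniteDimensional ℝ E]

theorem Finset.card_le_five_pow_of_isSeparated {s : Finset E}
    (hs : (s : Set E) ⊆ closedBall 0 1) (hsep : IsSeparated ((1 / 2 : ℝ≥0) : ℝ≥0∞) (s : Set E)) :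
    #s ≤ 5 ^ finrank ℝ E := by
  let _ : MeasurableSpace E := borel E
  have _ : BorelSpace E := ⟨rfl⟩
  let μ : Measure E := Measure.addHaar
  have hdisj : (s : Set E).PairwiseDisjoint fun t => ball t (1 / 4) := by
    intro x hx y hy hxy
    refine ball_disjoint_ball ?_
    have : ((1 / 2 : ℝ≥0) : ℝ≥0∞) < edist x y := hsep hx hy hxy
    rw [edist_nndist, ENNReal.coe_lt_coe, ← NNReal.coe_lt_coe, coe_nndist] at this
    norm_num at this ⊢
    linarith
  have hsub : ⋃ t ∈ s, ball t (1 / 4) ⊆ ball (0 : E) (5 / 4) := by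
    refine Set.iUnion₂_subset fun t ht x hx => ?_
    have := mem_closedBall_zero_iff.1 (hs ht)
    rw [mem_ball_zero_iff]
    rw [mem_ball, dist_eq_norm] at hx
    calc ‖x‖ ≤ ‖x - t‖ + ‖t‖ := norm_le_norm_sub_add x t
      _ < 5 / 4 := by linarith
  have hvol := (measure_biUnion_finset hdisj fun _ _ => measurableSet_ball).symm.trans_le
    (measure_mono (μ := μ) hsub)
  simp only [Measure.addHaar_ball_of_pos μ _ (by norm_num : (0 : ℝ) < 1 / 4),
    Measure.addHaar_ball_of_pos μ _ (by norm_num : (0 : ℝ) < 5 / 4), sum_const,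
    nsmul_eq_mul, ← mul_assoc] at hvol
  have hscaled := (ENNReal.mul_le_mul_iff_left (measure_ball_pos μ (0 : E) one_pos).ne'
    measure_ball_lt_top.ne).1 hvol
  rw [show (5 / 4 : ℝ) ^ finrank ℝ E = (5 : ℝ) ^ finrank ℝ E * (1 / 4) ^ finrank ℝ E by
    rw [← mul_pow]; norm_num, ENNReal.ofReal_mul (by positivity)] at hscaled
  have hcard := (ENNReal.mul_le_mul_iff_left (by simp) ENNReal.ofReal_ne_top).1 hscaled
  rw [ENNReal.ofReal_pow (by norm_num), ENNReal.ofReal_ofNat] at hcard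
  exact_mod_cast hcard

theorem packingNumber_half_closedBall_le :
    packingNumber (1 / 2) (closedBall (0 : E) 1) ≤ 5 ^ finrank ℝ E := by
  refine iSup₂_le fun C hC => iSup_le fun hsep => ?_
  by_contra! hlt
  obtain ⟨D, hDC, hD⟩ := Set.exists_subset_encard_eq (Order.add_one_le_of_lt hlt)
  have hfin : D.Finite := Set.finite_of_encard_eq_coe hD
  have := Finset.card_le_five_pow_of_isSeparated (s := hfin.toFinset)
    (by simpa using hDC.trans hC) (by simpa using hsep.subset hDC)
  rw [hfin.encard_eq_coe_toFinset_card] at hD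
  norm_cast at hD
  omega

theorem exists_finset_isCover_half_closedBall :
    ∃ T : Finset E, (T : Set E) ⊆ closedBall 0 1 ∧
      IsCover (1 / 2) (closedBall 0 1) (T : Set E) ∧ #T ≤ 5 ^ finrank ℝ E := by
  have hP := packingNumber_half_closedBall_le (E := E)
  have hP' : packingNumber (1 / 2) (closedBall (0 : E) 1) ≠ ⊤ :=
    ne_top_of_le_ne_top (by simp) hP
  have hfin : (maximalSeparatedSet (1 / 2) (closedBall (0 : E) 1)).Finite :=
    Set.encard_ne_top_iff.1 (by rwa [encard_maximalSeparatedSet hP'])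
  refine ⟨hfin.toFinset, by simpa using maximalSeparatedSet_subset,
    by simpa using isCover_maximalSeparatedSet hP', ?_⟩
  have := encard_maximalSeparatedSet hP'
  rw [hfin.encard_eq_coe_toFinset_card] at this
  exact_mod_cast this.trans_le hP

end Packing

namespace ProbabilityTheory

variable {Ω : Type*} [MeasurableSpace Ω] {μ : Measure Ω} {X : Ω → ℝ} {c c' : ℝ≥0}

lemma HasSubgaussianMGF.mono (h : HasSubgaussianMGF X c μ) (hc : c ≤ c') :
    HasSubgaussianMGF X c' μ where
  integrable_exp_mul := h.integrable_exp_mul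
  mgf_le t := (h.mgf_le t).trans (exp_le_exp.2 (by gcongr))

lemma hasSubgaussianMGF_id_gaussianReal (v : ℝ≥0) :
    HasSubgaussianMGF id v (gaussianReal 0 v) where
  integrable_exp_mul := integrable_exp_mul_gaussianReal
  mgf_le t := by simp [mgf_id_gaussianReal]

lemma hasSubgaussianMGF_of_map_eq_gaussianReal (hX : AEMeasurable X μ) {v : ℝ≥0}
    (h : μ.map X = gaussianReal 0 v) : HasSubgaussianMGF X v μ :=
  (HasSubgaussianMGF.id_map_iff hX).1 (h ▸ hasSubgaussianMGF_id_gaussianReal v)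

lemma hasSubgaussianMGF_sum_mul_of_gaussian {ι : Type*} [Fintype ι] {J : ι → Ω → ℝ}
    (hJm : ∀ i, Measurable (J i)) (hJg : ∀ i, μ.map (J i) = gaussianReal 0 1)
    (hJi : iIndepFun J μ) (a : ι → ℝ) (ha : ∑ i, a i ^ 2 ≤ 1) :
    HasSubgaussianMGF (fun ω => ∑ i, a i * J i ω) 1 μ := by
  have hsum := HasSubgaussianMGF.sum_of_iIndepFun (s := univ)
    (hJi.comp (fun i x => a i * x) fun i => measurable_const_mul (a i))
    fun i _ =>
      (hasSubgaussianMGF_of_map_eq_gaussianReal (hJm i).aemeasurable (hJg i)).const_mul (a i)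
  refine hsum.mono ?_
  rw [← NNReal.coe_le_coe, NNReal.coe_sum, NNReal.coe_one]
  refine (sum_le_sum fun i _ => ?_).trans ha
  show ((⟨a i ^ 2, sq_nonneg _⟩ : ℝ≥0) * 1 : ℝ) ≤ a i ^ 2
  simp

lemma HasSubgaussianMGF.integral_exp_add_exp_neg_le (h : HasSubgaussianMGF X c μ) (l : ℝ) :
    ∫ ω, (exp (l * X ω) + exp (-l * X ω)) ∂μ ≤ 2 * exp (c * l ^ 2 / 2) := by
  rw [integral_add (h.integrable_exp_mul l) (h.integrable_exp_mul (-l))]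
  have h1 := h.mgf_le l
  have h2 := h.mgf_le (-l)
  rw [neg_sq] at h2
  exact (add_le_add h1 h2).trans_eq (two_mul _).symm

/-- Tangent-line form of Jensen's inequality for `log` at the point `M`. -/
lemma abs_le_of_exp_mul_abs_le {x S M l : ℝ} (hl : 0 < l) (hM : 0 < M)
    (hS : exp (l * |x|) ≤ S) : |x| ≤ l⁻¹ * (log M + S / M - 1) := by
  have htangent := log_le_sub_one_of_pos (div_pos (exp_pos (l * |x|)) hM)
  rw [log_div (exp_pos _).ne' hM.ne', log_exp] at htangent
  rw [le_inv_mul_iff₀ hl]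
  have := div_le_div_of_nonneg_right hS hM.le
  linarith

/-- The maximum of `|X i|` need not be measurable, so the maximal inequality is stated through an
integrable majorant `R = l⁻¹ (log M + S / M - 1)`, where `S = ∑ (e^{l X} + e^{-l X})` and
`M = 2 #s e^{c l² / 2} ≥ E S`. -/
theorem HasSubgaussianMGF.exists_majorant_abs [IsProbabilityMeasure μ] {ι : Type*}
    {X : ι → Ω → ℝ} {s : Finset ι} (h : ∀ i ∈ s, HasSubgaussianMGF (X i) c μ) {l : ℝ}
    (hl : 0 < l) :
    ∃ R : Ω → ℝ, Integrable R μ ∧ (∀ ω, ∀ i ∈ s, |X i ω| ≤ R ω) ∧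
      ∫ ω, R ω ∂μ ≤ log (2 * #s) / l + c * l / 2 := by
  obtain rfl | hs := s.eq_empty_or_nonempty
  · exact ⟨0, integrable_zero _ _ _, by simp, by simp; positivity⟩
  set S : Ω → ℝ := fun ω => ∑ i ∈ s, (exp (l * X i ω) + exp (-l * X i ω))
  set M : ℝ := 2 * #s * exp (c * l ^ 2 / 2)
  have hM : 0 < M := by have := hs.card_pos; positivity
  have hint : ∀ i ∈ s, Integrable (fun ω => exp (l * X i ω) + exp (-l * X i ω)) μ :=
    fun i hi => ((h i hi).integrable_exp_mul l).add ((h i hi).integrable_exp_mul (-l))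
  have hS : Integrable S μ := integrable_finsetSum _ hint
  have hSM : ∫ ω, S ω ∂μ ≤ M := by
    calc ∫ ω, S ω ∂μ = ∑ i ∈ s, ∫ ω, (exp (l * X i ω) + exp (-l * X i ω)) ∂μ :=
          integral_finsetSum _ hint
      _ ≤ ∑ _i ∈ s, 2 * exp (c * l ^ 2 / 2) :=
          sum_le_sum fun i hi => (h i hi).integral_exp_add_exp_neg_le l
      _ = M := by rw [sum_const, nsmul_eq_mul]; ring
  have hR : ∫ ω, (log M + S ω / M - 1) ∂μ = log M + (∫ ω, S ω ∂μ) / M - 1 := by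
    rw [integral_sub (f := fun ω => log M + S ω / M) ((integrable_const _).add (hS.div_const M))
      (integrable_const 1), integral_add (integrable_const _) (hS.div_const M), integral_div]
    simp
  refine ⟨fun ω => l⁻¹ * (log M + S ω / M - 1),
    (((integrable_const _).add (hS.div_const M)).sub (integrable_const 1)).const_mul l⁻¹,
    fun ω i hi => abs_le_of_exp_mul_abs_le hl hM ?_, ?_⟩
  · refine le_trans ?_ (single_le_sum (f := fun i => exp (l * X i ω) + exp (-l * X i ω))
      (fun i _ => by positivity) hi)
    rcases abs_cases (X i ω) with ⟨h, -⟩ | ⟨h, -⟩ <;> rw [h]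
    · exact le_add_of_nonneg_right (exp_pos _).le
    · rw [mul_neg, ← neg_mul]; exact le_add_of_nonneg_left (exp_pos _).le
  · have hlogM : log M = log (2 * #s) + c * l ^ 2 / 2 := by
      rw [log_mul (by have := hs.card_pos; positivity) (exp_pos _).ne', log_exp]
    rw [integral_const_mul, hR]
    calc l⁻¹ * (log M + (∫ ω, S ω ∂μ) / M - 1) ≤ l⁻¹ * log M := by
          gcongr
          linarith [div_le_one_of_le₀ hSM hM.le]
      _ = log (2 * #s) / l + c * l / 2 := by rw [hlogM]; field_simp

end ProbabilityTheory

section TensorForm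

variable {ι : Type*} [Fintype ι] {p : ℕ}

noncomputable def tensorForm (a : (Fin p → ι) → ℝ) :
    ContinuousMultilinearMap ℝ (fun _ : Fin p => EuclideanSpace ℝ ι) ℝ :=
  ∑ i, a i • (ContinuousMultilinearMap.mkPiAlgebra ℝ (Fin p) ℝ).compContinuousLinearMap
    fun j => EuclideanSpace.proj (i j)

lemma tensorForm_apply (a : (Fin p → ι) → ℝ) (y : Fin p → EuclideanSpace ℝ ι) :
    tensorForm a y = ∑ i, a i * ∏ j, y j (i j) := by
  simp [tensorForm]

lemma sum_sq_prod_apply (y : Fin p → EuclideanSpace ℝ ι) :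
    ∑ i : Fin p → ι, (∏ j, y j (i j)) ^ 2 = ∏ j, ‖y j‖ ^ 2 := by
  simp_rw [EuclideanSpace.norm_sq_eq, Real.norm_eq_abs, sq_abs, prod_univ_sum, ← prod_pow]
  rfl

lemma hasSubgaussianMGF_tensorForm {Ω : Type*} [MeasurableSpace Ω] {μ : Measure Ω}
    {J : (Fin p → ι) → Ω → ℝ} (hJm : ∀ i, Measurable (J i))
    (hJg : ∀ i, μ.map (J i) = gaussianReal 0 1) (hJi : iIndepFun J μ)
    (y : Fin p → EuclideanSpace ℝ ι) (hy : ∀ j, ‖y j‖ ≤ 1) :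
    HasSubgaussianMGF (fun ω => tensorForm (fun i => J i ω) y) 1 μ := by
  simp_rw [tensorForm_apply, mul_comm (J _ _)]
  refine hasSubgaussianMGF_sum_mul_of_gaussian hJm hJg hJi _ ?_
  rw [sum_sq_prod_apply]
  exact prod_le_one (fun j _ => by positivity) fun j _ => pow_le_one₀ (norm_nonneg _) (hy j)

end TensorForm

lemma pspin_eq_tensorForm (p N : ℕ) (J : (Fin p → Fin N) → ℝ)
    (x : EuclideanSpace ℝ (Fin N)) :
    pspin p N J x = (N : ℝ) ^ (-(((p : ℝ) - 1) / 2)) * tensorForm J (fun _ => x) := by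
  rw [pspin, tensorForm_apply]

lemma rpow_neg_mul_sqrt_pow {x : ℝ} (hx : 0 < x) (p : ℕ) :
    x ^ (-(((p : ℝ) - 1) / 2)) * √x ^ p = √x := by
  rw [sqrt_eq_rpow, ← rpow_natCast, ← rpow_mul hx.le, ← rpow_add hx]
  congr 1
  ring

lemma iSup_sphereN_pspin_le {p N : ℕ} (hN : 0 < N) (J : (Fin p → Fin N) → ℝ) :
    ⨆ x : sphereN N, pspin p N J x ≤ √N * ‖tensorForm J‖ := by
  refine Real.iSup_le (fun ⟨x, hx⟩ => ?_) (by positivity)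
  have hx : ‖x‖ = √N := by simpa [sphereN] using hx
  calc pspin p N J x
        ≤ (N : ℝ) ^ (-(((p : ℝ) - 1) / 2)) * (‖tensorForm J‖ * ∏ _j : Fin p, ‖x‖) := by
        rw [pspin_eq_tensorForm]
        gcongr
        exact (le_abs_self _).trans ((tensorForm J).le_opNorm _)
    _ = √N * ‖tensorForm J‖ := by
        rw [prod_const, card_univ, Fintype.card_fin, hx, mul_left_comm,
          rpow_neg_mul_sqrt_pow (by exact_mod_cast hN), mul_comm]

/-- `f` need not be integrable: otherwise `∫ f = 0 ≤ b`. -/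
lemma integral_le_of_le_of_integrable {Ω : Type*} [MeasurableSpace Ω] {μ : Measure Ω}
    {f g : Ω → ℝ} {b : ℝ} (hg : Integrable g μ) (hfg : ∀ ω, f ω ≤ g ω) (hgb : ∫ ω, g ω ∂μ ≤ b)
    (hb : 0 ≤ b) : ∫ ω, f ω ∂μ ≤ b := by
  by_cases hf : Integrable f μ
  · exact (integral_mono hf hg hfg).trans hgb
  · rwa [integral_undef hf]

lemma log_two_mul_le {K d : ℕ} (hK : K ≤ 5 ^ d) : log (2 * K) ≤ 1 + 4 * d := by
  rcases K.eq_zero_or_pos with rfl | hK0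
  · simp; positivity
  calc log (2 * K) ≤ log (2 * 5 ^ d) := by gcongr; exact_mod_cast hK
    _ = log 2 + d * log 5 := by rw [log_mul two_ne_zero (by positivity), log_pow]
    _ ≤ 1 + d * 4 := by
        gcongr
        · linarith [log_le_sub_one_of_pos (zero_lt_two' ℝ)]
        · linarith [log_le_sub_one_of_pos (by norm_num : (0 : ℝ) < 5)]
    _ = 1 + 4 * d := by ring

lemma sqrt_mul_two_pow_mul_log_add_le {N p K : ℕ} (hN : 1 ≤ N) (hK : K ≤ 5 ^ (N * p)) :
    √N * 2 ^ p * (log (2 * K) / √N + √N / 2) ≤ 2 ^ (p + 1) * (2 * p + 1) * N := by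
  have hN1 : (1 : ℝ) ≤ N := by exact_mod_cast hN
  have hlog := log_two_mul_le hK
  push_cast at hlog
  calc √N * 2 ^ p * (log (2 * K) / √N + √N / 2) = 2 ^ p * (log (2 * K) + N / 2) := by
        field_simp
        rw [sq_sqrt (by positivity)]
    _ ≤ 2 ^ p * (2 * (2 * p + 1) * N) := by gcongr; linarith
    _ = 2 ^ (p + 1) * (2 * p + 1) * N := by ring

theorem pspin_ground_state_general (p : ℕ) :
    ∃ C > (0 : ℝ), ∀ N : ℕ, 1 ≤ N →
      ∀ (Ω : Type) (_ : MeasurableSpace Ω) (μ : Measure Ω), IsProbabilityMeasure μ →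
      ∀ J : (Fin p → Fin N) → Ω → ℝ,
        (∀ i, Measurable (J i)) →
        (∀ i, Measure.map (J i) μ = gaussianReal 0 1) →
        iIndepFun J μ →
        (∫ ω, ⨆ x : sphereN N, pspin p N (fun i => J i ω) x ∂μ) ≤ C * N := by
  refine ⟨2 ^ (p + 1) * (2 * p + 1), by positivity, fun N hN Ω _ μ _ J hJm hJg hJi => ?_⟩
  have hN0 : (0 : ℝ) < N := by exact_mod_cast hN
  obtain ⟨T, hT_ball, hT_cover, hT_card⟩ :=
    exists_finset_isCover_half_closedBall (E := EuclideanSpace ℝ (Fin N))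
  set F := Fintype.piFinset fun _ : Fin p => T
  obtain ⟨R, hR_int, hR_abs, hR_integral⟩ := HasSubgaussianMGF.exists_majorant_abs (s := F)
    (fun t ht => hasSubgaussianMGF_tensorForm hJm hJg hJi t fun j =>
      mem_closedBall_zero_iff.1 (hT_ball (Fintype.mem_piFinset.1 ht j))) (sqrt_pos.2 hN0)
  refine integral_le_of_le_of_integrable (hR_int.const_mul (√N * 2 ^ p)) (fun ω => ?_) ?_
    (by positivity)
  · calc _ ≤ √N * ‖tensorForm fun i => J i ω‖ := iSup_sphereN_pspin_le hN _
      _ ≤ √N * (2 ^ p * R ω) := by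
          gcongr
          exact ContinuousMultilinearMap.opNorm_le_two_pow_mul_of_isCover hT_cover _ fun t ht =>
            (Real.norm_eq_abs _).trans_le (hR_abs ω t (Fintype.mem_piFinset.2 ht))
      _ = √N * 2 ^ p * R ω := by ring
  have hF : #F ≤ 5 ^ (N * p) := by
    rw [Fintype.card_piFinset_const, pow_mul]
    rw [finrank_euclideanSpace_fin] at hT_card
    exact Nat.pow_le_pow_left hT_card p
  rw [integral_const_mul]
  exact (mul_le_mul_of_nonneg_left (by simpa using hR_integral) (by positivity)).trans
    (sqrt_mul_two_pow_mul_log_add_le hN hF)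

/-- **Order-`N` ground state.** For every `p ≥ 1` there is `C = C(p) > 0` such that for
all `N ≥ 1`, the expected maximum of the `p`-spin Hamiltonian over the sphere of radius
`√N` is at most `C·N`. -/
theorem pspin_ground_state (p : ℕ) (hp : 1 ≤ p) :
    ∃ C > (0 : ℝ), ∀ N : ℕ, 1 ≤ N →
      ∀ (Ω : Type) (_ : MeasurableSpace Ω) (μ : Measure Ω), IsProbabilityMeasure μ →
      ∀ J : (Fin p → Fin N) → Ω → ℝ,
        (∀ i, Measurable (J i)) →
        (∀ i, Measure.map (J i) μ = gaussianReal 0 1) →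
        iIndepFun J μ →
        (∫ ω, ⨆ x : sphereN N, pspin p N (fun i => J i ω) x ∂μ) ≤ C * N :=
  pspin_ground_state_general p
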